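/- Let 𝒞 be a class of finite groups. A finite group G belongs to the bidual class 𝒞** if and only if for every maximal normal subgroup H of G (i.e., H ⊴ G with G/H simple), the quotient G/H belongs to 𝒞. -/

import Mathlib

/-- A class of groups, given as a predicate on groups. -/
def GroupClass : Type 1 := (G : Type) → [inst : Group G] → Prop

/-- The class `C` is closed under isomorphism. -/
def IsoClosed (C : GroupClass) : Prop :=
  ∀ (G : Type) [Group G] (G' : Type) [Group G'], Nonempty (G ≃* G') → C G → C G'

/-- The dual class `C*`: groups `G` such that the only normal subgroup `H` with
`G/H ∈ C` is `H = G`. -/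
def dualClass (C : GroupClass) : GroupClass :=
  fun G _ => ∀ (H : Subgroup G) [H.Normal], C (G ⧸ H) → H = ⊤

/-- The associated class `Ĉ`: groups admitting a subnormal series whose successive
quotients all lie in `C`. -/
def assocClass (C : GroupClass) : GroupClass := fun G _ =>
  ∃ (n : ℕ) (s : Fin (n + 1) → Subgroup G),
    s 0 = ⊥ ∧ s (Fin.last n) = ⊤ ∧
    (∀ i : Fin n, s i.castSucc ≤ s i.succ) ∧
    ∀ i : Fin n,
      ∃ hn : ((s i.castSucc).subgroupOf (s i.succ)).Normal,
        letI := hn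
        C (↥(s i.succ) ⧸ (s i.castSucc).subgroupOf (s i.succ))

/-!
A simple group outside `C` lies in `C*`, its only proper quotient being itself; so a group in
`C**` has all its simple quotients in `C`. Conversely, a nontrivial quotient of a finite group `G`
has a simple quotient, which is also a simple quotient of `G` and hence lies in `C`; so no
nontrivial quotient of `G` lies in `C*`.
-/

open QuotientGroup

theorem isSimpleGroup_quotient_of_maximal {G : Type*} [Group G] {N : Subgroup G} [N.Normal]
    (hN : Maximal (fun K : Subgroup G => K.Normal ∧ K ≠ ⊤) N) : IsSimpleGroup (G ⧸ N) := by
  have : Nontrivial (G ⧸ N) := QuotientGroup.nontrivial_iff.mpr hN.prop.2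
  refine ⟨fun M hM => ?_⟩
  have hmap : (M.comap (mk' N)).map (mk' N) = M :=
    Subgroup.map_comap_eq_self_of_surjective (mk'_surjective N) M
  have hle : N ≤ M.comap (mk' N) := (ker_mk' N).ge.trans (MonoidHom.ker_le_comap _ M)
  by_cases htop : M.comap (mk' N) = ⊤
  · right
    rw [← hmap, htop, Subgroup.map_top_of_surjective _ (mk'_surjective N)]
  · left
    rw [← hmap, le_antisymm (hN.le_of_ge ⟨hM.comap _, htop⟩ hle) hle, map_mk'_self]

theorem exists_isSimpleGroup_quotient (G : Type*) [Group G] [Finite G] [Nontrivial G] :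
    ∃ (N : Subgroup G) (_ : N.Normal), IsSimpleGroup (G ⧸ N) := by
  obtain ⟨N, hN⟩ := (Set.toFinite {K : Subgroup G | K.Normal ∧ K ≠ ⊤}).exists_maximal
    ⟨⊥, inferInstance, bot_ne_top⟩
  have := hN.prop.1
  exact ⟨N, this, isSimpleGroup_quotient_of_maximal hN⟩

namespace IsoClosed

variable {C : GroupClass}

theorem dualClass_of_isSimpleGroup (hiso : IsoClosed C) {S : Type} [Group S] [IsSimpleGroup S]
    (hS : ¬ C S) : dualClass C S := by
  intro H hH hCH
  refine hH.eq_bot_or_eq_top.resolve_left ?_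
  rintro rfl
  exact hS (hiso _ _ ⟨quotientBot⟩ hCH)

theorem of_surjective_of_isSimpleGroup (hiso : IsoClosed C) {G : Type} [Group G]
    (hG : ∀ (H : Subgroup G) [H.Normal], IsSimpleGroup (G ⧸ H) → C (G ⧸ H))
    {S : Type} [Group S] [IsSimpleGroup S] {f : G →* S} (hf : Function.Surjective f) : C S :=
  let e := quotientKerEquivOfSurjective f hf
  hiso _ _ ⟨e⟩ (hG _ e.isSimpleGroup)

end IsoClosed

/-- A finite group `G` lies in the bidual class `C**` if and only if `G/H ∈ C` for
every maximal normal subgroup `H` of `G` (i.e. every normal `H` with `G/H` simple). -/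
theorem mem_bidual_iff (C : GroupClass) (hiso : IsoClosed C)
    (G : Type) [Group G] [Finite G] :
    dualClass (dualClass C) G ↔
      ∀ (H : Subgroup G) [H.Normal], IsSimpleGroup (G ⧸ H) → C (G ⧸ H) := by
  constructor
  · intro hG H _ hsimple
    by_contra hC
    exact QuotientGroup.nontrivial_iff.mp hsimple.toNontrivial
      (hG H (hiso.dualClass_of_isSimpleGroup hC))
  · intro hG H _ hdual
    by_contra hH
    have : Nontrivial (G ⧸ H) := QuotientGroup.nontrivial_iff.mpr hH
    obtain ⟨N, _, hsimple⟩ := exists_isSimpleGroup_quotient (G ⧸ H)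
    have hCN : C ((G ⧸ H) ⧸ N) :=
      hiso.of_surjective_of_isSimpleGroup hG (f := (mk' N).comp (mk' H))
        ((mk'_surjective N).comp (mk'_surjective H))
    exact QuotientGroup.nontrivial_iff.mp hsimple.toNontrivial (hdual N hCN)
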